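/- arXiv:2104.11046 — 5 statements merged into one kernel-verified Lean document; each statement's English description precedes it below -/
import Mathlib

section
/- The volume of the symmetric difference of two closed balls in ℝ³ of equal radius t whose centers are at distance δ apart is at most (4π/3)·(3δt² + δ³/4). -/
open MeasureTheory Set Metric Pointwise

noncomputable section

/-- 3-dimensional Euclidean space. -/
abbrev E3 := EuclideanSpace ℝ (Fin 3)

/-- The lattice generated by the vectors `b 0, b 1, b 2`. -/
def lat (b : Fin 3 → E3) : Set E3 := {x | ∃ n : Fin 3 → ℤ, x = ∑ i, (n i : ℝ) • b i}

/-- The unit cell spanned by the vectors `b 0, b 1, b 2`. -/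
def cell (b : Fin 3 → E3) : Set E3 :=
  {x | ∃ c : Fin 3 → ℝ, (∀ i, 0 ≤ c i ∧ c i < 1) ∧ x = ∑ i, c i • b i}

/-- The `k`-fold cover: points lying in at least `k` closed balls of radius `t`
centered at points of `A`. -/
def coverGE (A : Set E3) (t : ℝ) (k : ℕ) : Set E3 :=
  {x | ∃ F : Finset E3, F.card = k ∧ ↑F ⊆ A ∧ ∀ a ∈ F, dist x a ≤ t}

/-- Points lying in exactly `k` closed balls of radius `t` centered at points of `A`. -/
def coverEQ (A : Set E3) (t : ℝ) (k : ℕ) : Set E3 :=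
  {x | ∃ F : Finset E3, ↑F = {a ∈ A | dist x a ≤ t} ∧ F.card = k}

/-- The `k`-th Dirichlet–Voronoi domain of `a` in `A` (with `D_0 = ∅`). -/
def DV (A : Set E3) (a : E3) : ℕ → Set E3
  | 0 => ∅
  | (k+1) => {x | ({b ∈ A | dist x b < dist x a}).ncard ≤ k}

/-- The `k`-th Brillouin zone of `a` in `A`. -/
def BZ (A : Set E3) (a : E3) (k : ℕ) : Set E3 := DV A a k \ DV A a (k-1)

/-! Both balls lie in the ball of radius `t + δ/2` about the midpoint `m` of `a` and `q`, and
each contains the ball of radius `t - δ/2` about `m`; so the symmetric difference lies in that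
spherical shell, whose volume is `(4π/3)((t + δ/2)³ - (t - δ/2)³) = (4π/3)(3δt² + δ³/4)` when
`δ ≤ 2t`. For `δ > 2t` the inner ball is empty and the bound still holds since `(t - δ/2)³ < 0`. -/

open scoped symmDiff

theorem closedBall_diff_closedBall_subset {α : Type*} [PseudoMetricSpace α] (x y m : α)
    (t : ℝ) :
    closedBall x t \ closedBall y t ⊆
      closedBall m (t + dist x m) \ closedBall m (t - dist m y) := by
  rintro z ⟨hzx, hzy⟩
  rw [mem_closedBall] at hzx hzy
  refine ⟨?_, fun hzm => hzy ?_⟩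
  · rw [mem_closedBall]
    linarith [dist_triangle z x m]
  · rw [mem_closedBall] at hzm
    linarith [dist_triangle z m y]

theorem symmDiff_closedBall_subset_closedBall_midpoint_diff {V : Type*} [NormedAddCommGroup V]
    [NormedSpace ℝ V] (a q : V) (t : ℝ) :
    closedBall a t ∆ closedBall q t ⊆
      closedBall (midpoint ℝ a q) (t + dist a q / 2) \
        closedBall (midpoint ℝ a q) (t - dist a q / 2) := by
  have h_left : dist a (midpoint ℝ a q) = dist a q / 2 := by
    rw [dist_left_midpoint, Real.norm_two, inv_mul_eq_div]
  have h_right : dist q (midpoint ℝ a q) = dist a q / 2 := by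
    rw [dist_right_midpoint, Real.norm_two, inv_mul_eq_div]
  rintro x (hx | hx)
  · have := closedBall_diff_closedBall_subset a q (midpoint ℝ a q) t hx
    rwa [h_left, dist_comm (midpoint ℝ a q) q, h_right] at this
  · have := closedBall_diff_closedBall_subset q a (midpoint ℝ a q) t hx
    rwa [h_right, dist_comm (midpoint ℝ a q) a, h_left] at this

theorem volume_closedBall_diff_closedBall_fin_three (x : E3) {r R : ℝ} (hr : 0 ≤ r)
    (hrR : r ≤ R) :
    volume (closedBall x R \ closedBall x r) =
      ENNReal.ofReal (4 * Real.pi / 3 * (R ^ 3 - r ^ 3)) := by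
  rw [measure_sdiff (closedBall_subset_closedBall hrR) measurableSet_closedBall.nullMeasurableSet
      measure_closedBall_lt_top.ne, EuclideanSpace.volume_closedBall_fin_three,
    EuclideanSpace.volume_closedBall_fin_three, ← ENNReal.ofReal_pow hr,
    ← ENNReal.ofReal_pow (hr.trans hrR), ← ENNReal.ofReal_mul (pow_nonneg hr 3),
    ← ENNReal.ofReal_mul (pow_nonneg (hr.trans hrR) 3), ← ENNReal.ofReal_sub _ (by positivity)]
  congr 1
  ring

theorem volume_closedBall_diff_closedBall_le_fin_three (x : E3) {r R : ℝ} (hrR : r ≤ R) :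
    volume (closedBall x R \ closedBall x r) ≤
      ENNReal.ofReal (4 * Real.pi / 3 * (R ^ 3 - r ^ 3)) := by
  rcases le_or_gt 0 r with hr | hr
  · exact (volume_closedBall_diff_closedBall_fin_three x hr hrR).le
  rcases lt_or_ge R 0 with hR | hR
  · simp [closedBall_eq_empty.2 hR]
  have hr_cube : r ^ 3 < 0 := Odd.pow_neg (by decide) hr
  calc volume (closedBall x R \ closedBall x r)
      ≤ volume (closedBall x R) := measure_mono sdiff_subset
    _ = volume (closedBall x R \ closedBall x 0) := (measure_sdiff_null (by simp)).symm
    _ = ENNReal.ofReal (4 * Real.pi / 3 * (R ^ 3 - 0 ^ 3)) :=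
        volume_closedBall_diff_closedBall_fin_three x le_rfl hR
    _ ≤ ENNReal.ofReal (4 * Real.pi / 3 * (R ^ 3 - r ^ 3)) := by
        gcongr ENNReal.ofReal (4 * Real.pi / 3 * (R ^ 3 - ?_))
        simpa using hr_cube.le

theorem volume_symmDiff_balls_le_general (t δ : ℝ) (a q : E3)
    (hδ : dist a q = δ) :
    volume ((closedBall a t \ closedBall q t) ∪ (closedBall q t \ closedBall a t)) ≤
      ENNReal.ofReal ((4 * Real.pi / 3) * (3 * δ * t ^ 2 + δ ^ 3 / 4)) := by
  have hδ_nonneg : 0 ≤ δ := hδ ▸ dist_nonneg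
  have h_shell := symmDiff_closedBall_subset_closedBall_midpoint_diff a q t
  rw [hδ] at h_shell
  calc volume ((closedBall a t \ closedBall q t) ∪ (closedBall q t \ closedBall a t))
      ≤ ENNReal.ofReal (4 * Real.pi / 3 * ((t + δ / 2) ^ 3 - (t - δ / 2) ^ 3)) :=
        (measure_mono h_shell).trans
          (volume_closedBall_diff_closedBall_le_fin_three _ (by linarith))
    _ = ENNReal.ofReal ((4 * Real.pi / 3) * (3 * δ * t ^ 2 + δ ^ 3 / 4)) := by ring_nf

theorem volume_symmDiff_balls_le (t δ : ℝ) (ht : 0 ≤ t) (a q : E3)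
    (hδ : dist a q = δ) :
    volume ((closedBall a t \ closedBall q t) ∪ (closedBall q t \ closedBall a t)) ≤
      ENNReal.ofReal ((4 * Real.pi / 3) * (3 * δ * t ^ 2 + δ ^ 3 / 4)) :=
  volume_symmDiff_balls_le_general t δ a q hδ
end
end

section
/- Let A, Q ⊆ ℝ³ be periodic point sets and let r_Q > 0 be the packing radius of Q. If there exists a bijection γ: A → Q with sup_{a∈A} ‖a − γ(a)‖ < r_Q, then there exists a common full-rank lattice Λ with unit cell U such that A = (A ∩ U) + Λ, Q = (Q ∩ U) + Λ, and |A ∩ U| = |Q ∩ U|. -/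
open MeasureTheory Set Metric Pointwise

noncomputable section

/-!
Since `γ` moves points by at most `δ < r_Q` and the points of `Q` are `2 r_Q` apart, `γ a` is the
only point of `Q` within `δ` of `a`. Hence if periods `l` of `A` and `m` of `Q` satisfy
`‖l - m‖ < 2 (r_Q - δ)`, translating `A` by `l` corresponds under `γ` to translating `Q` by `m`;
iterating gives `n ‖l - m‖ ≤ 2δ` for all `n`, so `l = m`. Thus `Λ_A + Λ_Q` is discrete, `Λ_Q` has
finite index in it (compare covolumes), and `Λ = Λ_A ∩ Λ_Q` is a full-rank lattice. Finally `γ`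
commutes with translations by `Λ`, so reducing modulo `Λ` turns it into a bijection between the
points of `A` and of `Q` in a unit cell of `Λ`.
-/

section Periodic

variable {E : Type*} [AddCommGroup E]

def IsPeriodicBy (L : Submodule ℤ E) (S : Set E) : Prop :=
  ∀ a ∈ S, ∀ v ∈ L, a + v ∈ S

theorem isPeriodicBy_add (M : Set E) (L : Submodule ℤ E) : IsPeriodicBy L (M + L) := by
  rintro _ ⟨t, ht, w, hw, rfl⟩ v hv
  exact ⟨t, ht, w + v, L.add_mem hw hv, (add_assoc t w v).symm⟩

namespace IsPeriodicBy

variable {L L' : Submodule ℤ E} {S : Set E}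

theorem mono (h : IsPeriodicBy L S) (hL : L' ≤ L) : IsPeriodicBy L' S :=
  fun a ha v hv ↦ h a ha v (hL hv)

theorem sub_mem (h : IsPeriodicBy L S) {a v : E} (ha : a ∈ S) (hv : v ∈ L) : a - v ∈ S :=
  sub_eq_add_neg a v ▸ h a ha (-v) (L.neg_mem hv)

theorem nsmul_mem (h : IsPeriodicBy L S) {a v : E} (ha : a ∈ S) (hv : v ∈ L) (n : ℕ) :
    a + n • v ∈ S :=
  h a ha _ (L.nsmul_mem hv n)

end IsPeriodicBy

end Periodic

section Matching

variable {E : Type*} [NormedAddCommGroup E] {A Q : Set E} {γ : E → E} {r δ : ℝ}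

theorem apply_add_eq_of_dist_lt (hpack : ∀ q ∈ Q, ∀ q' ∈ Q, q ≠ q' → 2 * r ≤ dist q q')
    (hmaps : MapsTo γ A Q) (hclose : ∀ a ∈ A, dist a (γ a) ≤ δ) {a v w : E} (ha : a ∈ A)
    (hav : a + v ∈ A) (hw : γ a + w ∈ Q) (hvw : dist v w < 2 * (r - δ)) :
    γ (a + v) = γ a + w := by
  by_contra hne
  have hsep := hpack _ (hmaps hav) _ hw hne
  have hnear : dist (γ (a + v)) (γ a + w) ≤ δ + (δ + dist v w) :=
    calc dist (γ (a + v)) (γ a + w)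
        ≤ dist (γ (a + v)) (a + v) + dist (a + v) (γ a + w) := dist_triangle _ _ _
      _ ≤ δ + (dist a (γ a) + dist v w) := by
          gcongr
          · exact dist_comm (a + v) _ ▸ hclose _ hav
          · exact dist_add_add_le _ _ _ _
      _ ≤ δ + (δ + dist v w) := by grw [hclose a ha]
  linarith

theorem apply_add_eq_add (hpack : ∀ q ∈ Q, ∀ q' ∈ Q, q ≠ q' → 2 * r ≤ dist q q')
    (hmaps : MapsTo γ A Q) (hclose : ∀ a ∈ A, dist a (γ a) ≤ δ) (hδ : δ < r)
    {L : Submodule ℤ E} (hA : IsPeriodicBy L A) (hQ : IsPeriodicBy L Q) {a v : E} (ha : a ∈ A)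
    (hv : v ∈ L) : γ (a + v) = γ a + v :=
  apply_add_eq_of_dist_lt hpack hmaps hclose ha (hA a ha v hv) (hQ _ (hmaps ha) v hv)
    (by rw [dist_self]; linarith)

variable {LA LQ : Submodule ℤ E}

theorem apply_add_nsmul_eq (hpack : ∀ q ∈ Q, ∀ q' ∈ Q, q ≠ q' → 2 * r ≤ dist q q')
    (hmaps : MapsTo γ A Q) (hclose : ∀ a ∈ A, dist a (γ a) ≤ δ)
    (hA : IsPeriodicBy LA A) (hQ : IsPeriodicBy LQ Q) {a l m : E} (ha : a ∈ A) (hl : l ∈ LA)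
    (hm : m ∈ LQ) (hlm : dist l m < 2 * (r - δ)) (n : ℕ) :
    γ (a + n • l) = γ a + n • m := by
  induction n with
  | zero => simp
  | succ n ih =>
    have han := hA.nsmul_mem ha hl n
    rw [succ_nsmul, succ_nsmul, ← add_assoc, ← add_assoc, ← ih]
    exact apply_add_eq_of_dist_lt hpack hmaps hclose han (hA _ han l hl)
      (hQ _ (hmaps han) m hm) hlm

theorem periods_eq_of_dist_lt [NormedSpace ℝ E]
    (hpack : ∀ q ∈ Q, ∀ q' ∈ Q, q ≠ q' → 2 * r ≤ dist q q')
    (hmaps : MapsTo γ A Q) (hclose : ∀ a ∈ A, dist a (γ a) ≤ δ)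
    (hA : IsPeriodicBy LA A) (hQ : IsPeriodicBy LQ Q) {a l m : E} (ha : a ∈ A) (hl : l ∈ LA)
    (hm : m ∈ LQ) (hlm : dist l m < 2 * (r - δ)) : l = m := by
  have hbound (n : ℕ) : n • dist l m ≤ δ + δ :=
    calc n • dist l m = dist (a + n • l - a) (γ a + n • m - γ a) := by
          rw [add_sub_cancel_left, add_sub_cancel_left, dist_eq_norm, dist_eq_norm, ← smul_sub,
            RCLike.norm_nsmul ℝ]
      _ ≤ dist (a + n • l) (γ a + n • m) + dist a (γ a) := dist_sub_sub_le _ _ _ _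
      _ ≤ δ + δ := by
          rw [← apply_add_nsmul_eq hpack hmaps hclose hA hQ ha hl hm hlm n]
          exact add_le_add (hclose _ (hA.nsmul_mem ha hl n)) (hclose a ha)
  by_contra hne
  obtain ⟨n, hn⟩ := Archimedean.arch (δ + δ + 1) (dist_pos.mpr hne)
  linarith [hbound n]

theorem discreteTopology_sup_of_matching [NormedSpace ℝ E]
    (hpack : ∀ q ∈ Q, ∀ q' ∈ Q, q ≠ q' → 2 * r ≤ dist q q')
    (hmaps : MapsTo γ A Q) (hclose : ∀ a ∈ A, dist a (γ a) ≤ δ) (hδ : δ < r)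
    (hA : IsPeriodicBy LA A) (hQ : IsPeriodicBy LQ Q) (hne : A.Nonempty) :
    DiscreteTopology (LA ⊔ LQ : Submodule ℤ E) := by
  obtain ⟨a, ha⟩ := hne
  refine .of_forall_le_norm (by linarith : 0 < 2 * (r - δ)) fun ⟨x, hx⟩ hx0 ↦ ?_
  obtain ⟨l, hl, m, hm, rfl⟩ := Submodule.mem_sup.mp hx
  by_contra! hlt
  have hlm : dist l (-m) < 2 * (r - δ) := by simpa [dist_eq_norm] using hlt
  have := periods_eq_of_dist_lt hpack hmaps hclose hA hQ ha hl (LQ.neg_mem hm) hlm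
  exact hx0 (Subtype.ext (by simp [this]))

end Matching

section Lattice

variable {E : Type*} [NormedAddCommGroup E]

theorem span_inf_eq_top_of_discreteTopology_sup [InnerProductSpace ℝ E] [FiniteDimensional ℝ E]
    {L₁ L₂ : Submodule ℤ E} (h₁ : Submodule.span ℝ (L₁ : Set E) = ⊤) [DiscreteTopology L₂]
    [IsZLattice ℝ L₂] [DiscreteTopology (L₁ ⊔ L₂ : Submodule ℤ E)] :
    Submodule.span ℝ ((L₁ ⊓ L₂ : Submodule ℤ E) : Set E) = ⊤ := by
  let := borel E
  have : BorelSpace E := ⟨rfl⟩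
  have : IsZLattice ℝ (L₁ ⊔ L₂) :=
    ⟨top_le_iff.mp (h₁ ▸ Submodule.span_mono (le_sup_left (b := L₂)))⟩
  have hindex : L₂.toAddSubgroup.relIndex (L₁ ⊔ L₂).toAddSubgroup ≠ 0 := by
    have hpos := div_pos (ZLattice.covolume_pos L₂) (ZLattice.covolume_pos (L₁ ⊔ L₂))
    rw [ZLattice.covolume_div_covolume_eq_relIndex' L₂ _ le_sup_right] at hpos
    exact_mod_cast hpos.ne'
  rw [eq_top_iff, ← h₁, Submodule.span_le]
  intro x hx
  obtain ⟨n, hn, -, hnx, -⟩ :=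
    AddSubgroup.exists_nsmul_mem_of_relIndex_ne_zero hindex (Submodule.mem_sup_left hx)
  have hn' : (n : ℝ) ≠ 0 := Nat.cast_ne_zero.mpr hn.ne'
  have hmem : (n : ℝ) • x ∈ Submodule.span ℝ (L₁ ⊓ L₂ : Set E) := by
    rw [Nat.cast_smul_eq_nsmul]
    exact Submodule.subset_span ⟨L₁.nsmul_mem hx n, hnx⟩
  simpa [inv_smul_smul₀ hn'] using Submodule.smul_mem _ (n : ℝ)⁻¹ hmem

theorem ZLattice.exists_basis_span_eq [NormedSpace ℝ E] [FiniteDimensional ℝ E] {ι : Type*}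
    [Fintype ι] (h : Fintype.card ι = Module.finrank ℝ E) (L : Submodule ℤ E)
    [DiscreteTopology L] [IsZLattice ℝ L] :
    ∃ b : Module.Basis ι ℝ E, Submodule.span ℤ (range b) = L := by
  have hcard : Fintype.card (Module.Free.ChooseBasisIndex ℤ L) = Fintype.card ι := by
    rw [← Module.finrank_eq_card_chooseBasisIndex, ZLattice.rank ℝ L, h]
  let b := (Module.Free.chooseBasis ℤ L).reindex (Fintype.equivOfCardEq hcard)
  exact ⟨b.ofZLatticeBasis ℝ L, b.ofZLatticeBasis_span ℝ L⟩

end Lattice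

section FundamentalDomain

variable {E ι : Type*} [NormedAddCommGroup E] [NormedSpace ℝ E] [Fintype ι]
  {b : Module.Basis ι ℝ E}

namespace IsPeriodicBy

theorem fract_mem {S : Set E} (h : IsPeriodicBy (Submodule.span ℤ (range b)) S) {s : E}
    (hs : s ∈ S) : ZSpan.fract b s ∈ S :=
  ZSpan.fract_apply b s ▸ h.sub_mem hs (ZSpan.floor b s).2

theorem eq_inter_fundamentalDomain_add {S : Set E}
    (h : IsPeriodicBy (Submodule.span ℤ (range b)) S) :
    S = (S ∩ ZSpan.fundamentalDomain b) + Submodule.span ℤ (range b) := by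
  refine Subset.antisymm (fun s hs ↦ ?_) ?_
  · refine ⟨ZSpan.fract b s, ⟨h.fract_mem hs, ZSpan.fract_mem_fundamentalDomain b s⟩,
      ZSpan.floor b s, (ZSpan.floor b s).2, sub_add_cancel s _⟩
  · rintro _ ⟨s, ⟨hs, -⟩, v, hv, rfl⟩
    exact h s hs v hv

variable {A Q : Set E} {γ : E → E}

theorem bijOn_fract_comp_inter_fundamentalDomain
    (hA : IsPeriodicBy (Submodule.span ℤ (range b)) A)
    (hQ : IsPeriodicBy (Submodule.span ℤ (range b)) Q) (hγ : BijOn γ A Q)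
    (hequiv : ∀ a ∈ A, ∀ v ∈ Submodule.span ℤ (range b), γ (a + v) = γ a + v) :
    BijOn (ZSpan.fract b ∘ γ) (A ∩ ZSpan.fundamentalDomain b)
      (Q ∩ ZSpan.fundamentalDomain b) := by
  refine ⟨fun a ha ↦ ⟨hQ.fract_mem (hγ.mapsTo ha.1), ZSpan.fract_mem_fundamentalDomain b _⟩,
    fun a₁ ha₁ a₂ ha₂ heq ↦ ?_, fun q hq ↦ ?_⟩
  · have hv := (ZSpan.fract_eq_fract b _ _).mp heq
    have ha₁₂ : a₂ = a₁ + (-γ a₁ + γ a₂) :=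
      hγ.injOn ha₂.1 (hA a₁ ha₁.1 _ hv) (by rw [hequiv a₁ ha₁.1 _ hv, add_neg_cancel_left])
    rw [← ZSpan.fract_eq_self.mpr ha₁.2, ← ZSpan.fract_eq_self.mpr ha₂.2, ha₁₂,
      ZSpan.fract_add_ZSpan b _ hv]
  · obtain ⟨a, ha, rfl⟩ := hγ.surjOn hq.1
    have hfloor := (Submodule.span ℤ (range b)).neg_mem (ZSpan.floor b a).2
    refine ⟨ZSpan.fract b a, ⟨hA.fract_mem ha, ZSpan.fract_mem_fundamentalDomain b a⟩, ?_⟩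
    rw [Function.comp_apply, ZSpan.fract_apply b a, sub_eq_add_neg, hequiv a ha _ hfloor,
      ZSpan.fract_add_ZSpan b _ hfloor, ZSpan.fract_eq_self.mpr hq.2]

end IsPeriodicBy

end FundamentalDomain

theorem lat_eq_span (b : Fin 3 → E3) : lat b = Submodule.span ℤ (range b) := by
  ext x
  simp [lat, Submodule.mem_span_range_iff_exists_fun, eq_comm, Int.cast_smul_eq_zsmul]

theorem cell_eq_fundamentalDomain (b : Module.Basis (Fin 3) ℝ E3) :
    cell b = ZSpan.fundamentalDomain b := by
  ext x
  rw [ZSpan.mem_fundamentalDomain]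
  constructor
  · rintro ⟨c, hc, rfl⟩ i
    rw [b.repr_sum_self]
    exact hc i
  · exact fun hx ↦ ⟨fun i ↦ b.repr x i, hx, (b.sum_repr x).symm⟩

theorem exists_basis_coe_eq {b : Fin 3 → E3} (hb : LinearIndependent ℝ b) :
    ∃ c : Module.Basis (Fin 3) ℝ E3, ⇑c = b :=
  ⟨_, coe_basisOfLinearIndependentOfCardEqFinrank hb (by simp)⟩

theorem common_lattice_general (bA bQ : Fin 3 → E3)
    (hbA : LinearIndependent ℝ bA) (hbQ : LinearIndependent ℝ bQ)
    (MA MQ : Finset E3)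
    (A Q : Set E3) (hA : A = ↑MA + lat bA) (hQ : Q = ↑MQ + lat bQ)
    (rQ : ℝ)
    (hpackQ : ∀ q ∈ Q, ∀ q' ∈ Q, q ≠ q' → 2 * rQ ≤ dist q q')
    (γ : E3 → E3) (hγ : Set.BijOn γ A Q)
    (δ : ℝ) (hδ : δ < rQ) (hclose : ∀ a ∈ A, dist a (γ a) ≤ δ) :
    ∃ b : Fin 3 → E3, LinearIndependent ℝ b ∧
      A = (A ∩ cell b) + lat b ∧ Q = (Q ∩ cell b) + lat b ∧
      (A ∩ cell b).ncard = (Q ∩ cell b).ncard := by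
  rcases A.eq_empty_or_nonempty with rfl | hAne
  · obtain rfl : Q = ∅ := by simpa using hγ.image_eq.symm
    exact ⟨bA, hbA, by simp, by simp, rfl⟩
  obtain ⟨cA, rfl⟩ := exists_basis_coe_eq hbA
  obtain ⟨cQ, rfl⟩ := exists_basis_coe_eq hbQ
  set LA := Submodule.span ℤ (range cA)
  set LQ := Submodule.span ℤ (range cQ)
  have hAper : IsPeriodicBy LA A := hA ▸ lat_eq_span cA ▸ isPeriodicBy_add _ _
  have hQper : IsPeriodicBy LQ Q := hQ ▸ lat_eq_span cQ ▸ isPeriodicBy_add _ _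
  have := discreteTopology_sup_of_matching hpackQ hγ.mapsTo hclose hδ hAper hQper hAne
  have : DiscreteTopology (LA ⊓ LQ : Submodule ℤ E3) :=
    .of_subset this (SetLike.coe_subset_coe.mpr inf_le_sup)
  have : IsZLattice ℝ (LA ⊓ LQ) :=
    ⟨span_inf_eq_top_of_discreteTopology_sup IsZLattice.span_top⟩
  obtain ⟨b, hb⟩ := ZLattice.exists_basis_span_eq (ι := Fin 3) (by simp) (LA ⊓ LQ)
  have hAb : IsPeriodicBy (Submodule.span ℤ (range b)) A := hb ▸ hAper.mono inf_le_left
  have hQb : IsPeriodicBy (Submodule.span ℤ (range b)) Q := hb ▸ hQper.mono inf_le_right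
  refine ⟨b, b.linearIndependent, ?_, ?_, ?_⟩ <;> rw [cell_eq_fundamentalDomain]
  · rw [lat_eq_span]; exact hAb.eq_inter_fundamentalDomain_add
  · rw [lat_eq_span]; exact hQb.eq_inter_fundamentalDomain_add
  · exact (hAb.bijOn_fract_comp_inter_fundamentalDomain hQb hγ fun _ ha _ hv ↦
      apply_add_eq_add hpackQ hγ.mapsTo hclose hδ hAb hQb ha hv).ncard_eq

theorem common_lattice (bA bQ : Fin 3 → E3)
    (hbA : LinearIndependent ℝ bA) (hbQ : LinearIndependent ℝ bQ)
    (MA MQ : Finset E3) (hMA : ↑MA ⊆ cell bA) (hMQ : ↑MQ ⊆ cell bQ)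
    (A Q : Set E3) (hA : A = ↑MA + lat bA) (hQ : Q = ↑MQ + lat bQ)
    (rQ : ℝ) (hrQ : 0 < rQ)
    (hpackQ : ∀ q ∈ Q, ∀ q' ∈ Q, q ≠ q' → 2 * rQ ≤ dist q q')
    (γ : E3 → E3) (hγ : Set.BijOn γ A Q)
    (δ : ℝ) (hδ : δ < rQ) (hclose : ∀ a ∈ A, dist a (γ a) ≤ δ) :
    ∃ b : Fin 3 → E3, LinearIndependent ℝ b ∧
      A = (A ∩ cell b) + lat b ∧ Q = (Q ∩ cell b) + lat b ∧
      (A ∩ cell b).ncard = (Q ∩ cell b).ncard :=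
  common_lattice_general bA bQ hbA hbQ MA MQ A Q hA hQ rQ hpackQ γ hγ δ hδ hclose
end
end

section
/- Let A ⊆ ℝ³ be a Delone set with packing radius r > 0 and covering radius R < ∞. Then for every a ∈ A and every k ≥ 1, the k-th Dirichlet–Voronoi domain D_k(a;A) is a bounded set; specifically, it is contained in the closed ball of radius 2R·(k)^{1/3} + 2R around a. -/
/-!
If `x` is farther than `t = R k^{1/3} + R` from `a`, count the points of `A` in the closed ball
of radius `t` about `x`: they are all strictly closer to `x` than `a`, and there are finitely many
by the packing condition. Every point of the ball of radius `t - R = R k^{1/3}` about `x` lies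
within `R` of one of them, so comparing volumes, `(R k^{1/3})^3 ≤ N R^3`, i.e. there are at least
`k` of them, and `x ∉ D_k(a; A)`.
-/

open MeasureTheory Set Metric Pointwise

noncomputable section

section Packing

variable {X : Type*} [PseudoMetricSpace X]

theorem Set.Finite.inter_of_totallyBounded_of_pairwise_le_dist {A K : Set X} {r : ℝ} (hr : 0 < r)
    (hpack : A.Pairwise fun a b => 2 * r ≤ dist a b) (hK : TotallyBounded K) :
    (A ∩ K).Finite := by
  obtain ⟨T, hT, hKT⟩ := Metric.totallyBounded_iff.mp hK r hr
  refine (hT.biUnion fun y _ => (?_ : (A ∩ ball y r).Finite)).subset fun b hb => ?_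
  · -- two points of `A` in one ball of radius `r` are closer than `2 * r`
    refine Set.Subsingleton.finite fun b hb c hc => by_contra fun hbc => ?_
    have := hpack hb.1 hc.1 hbc
    linarith [dist_triangle_right b c y, mem_ball.mp hb.2, mem_ball.mp hc.2]
  · obtain ⟨y, hy, hby⟩ := mem_iUnion₂.mp (hKT hb.2)
    exact mem_iUnion₂.mpr ⟨y, hy, hb.1, hby⟩

theorem ball_sub_subset_biUnion_inter_closedBall {A : Set X} {R : ℝ}
    (hcover : ∀ y : X, ∃ a ∈ A, dist y a ≤ R) (x : X) (t : ℝ) :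
    ball x (t - R) ⊆ ⋃ b ∈ A ∩ closedBall x t, closedBall b R := by
  intro y hy
  obtain ⟨b, hbA, hyb⟩ := hcover y
  have hxb : dist b x ≤ t := by linarith [dist_triangle b y x, dist_comm b y, mem_ball.mp hy]
  exact mem_iUnion₂.mpr ⟨b, ⟨hbA, hxb⟩, hyb⟩

end Packing

section Volume

open Module

variable {E : Type*} [NormedAddCommGroup E] [NormedSpace ℝ E] [FiniteDimensional ℝ E]
  [Nontrivial E] [MeasurableSpace E] [BorelSpace E]

theorem pow_finrank_le_ncard_mul_of_ball_subset_biUnion {x : E} {s R : ℝ} (hs : 0 ≤ s)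
    (hR : 0 ≤ R) {F : Set E} (hF : F.Finite) (h : ball x s ⊆ ⋃ b ∈ F, closedBall b R) :
    s ^ finrank ℝ E ≤ F.ncard * R ^ finrank ℝ E := by
  lift F to Finset E using hF
  set μ : Measure E := Measure.addHaar
  have hvol : ENNReal.ofReal (s ^ finrank ℝ E) * μ (ball 0 1) ≤
      ENNReal.ofReal (F.card * R ^ finrank ℝ E) * μ (ball 0 1) :=
    calc ENNReal.ofReal (s ^ finrank ℝ E) * μ (ball 0 1) = μ (ball x s) :=
          (μ.addHaar_ball x hs).symm
      _ ≤ ∑ b ∈ F, μ (closedBall b R) := (measure_mono h).trans (measure_biUnion_finset_le F _)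
      _ = ENNReal.ofReal (F.card * R ^ finrank ℝ E) * μ (ball 0 1) := by
          simp only [μ.addHaar_closedBall _ hR, Finset.sum_const, nsmul_eq_mul]
          rw [ENNReal.ofReal_mul (by positivity), ENNReal.ofReal_natCast, mul_assoc]
  rw [ENNReal.mul_le_mul_iff_left (measure_ball_pos μ 0 one_pos).ne' measure_ball_lt_top.ne,
    ENNReal.ofReal_le_ofReal_iff (by positivity)] at hvol
  simpa using hvol

theorem le_ncard_inter_closedBall_of_forall_dist_le {A : Set E} {R : ℝ} (hR : 0 < R)
    (hcover : ∀ y : E, ∃ a ∈ A, dist y a ≤ R) (x : E) (k : ℕ)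
    (hfin : (A ∩ closedBall x (R * (k : ℝ) ^ ((1 : ℝ) / finrank ℝ E) + R)).Finite) :
    k ≤ (A ∩ closedBall x (R * (k : ℝ) ^ ((1 : ℝ) / finrank ℝ E) + R)).ncard := by
  have hcov := ball_sub_subset_biUnion_inter_closedBall hcover x
    (R * (k : ℝ) ^ ((1 : ℝ) / finrank ℝ E) + R)
  rw [add_sub_cancel_right] at hcov
  have hvol := pow_finrank_le_ncard_mul_of_ball_subset_biUnion (by positivity) hR.le hfin hcov
  have hpow : (R * (k : ℝ) ^ ((1 : ℝ) / finrank ℝ E)) ^ finrank ℝ E = k * R ^ finrank ℝ E := by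
    rw [mul_pow, one_div, Real.rpow_inv_natCast_pow k.cast_nonneg finrank_pos.ne', mul_comm]
  rw [hpow] at hvol
  exact_mod_cast le_of_mul_le_mul_right hvol (by positivity)

end Volume

theorem DV_bounded_general (A : Set E3) (r R : ℝ) (hr : 0 < r) (hR : 0 < R)
    (hpack : ∀ a ∈ A, ∀ b ∈ A, a ≠ b → 2 * r ≤ dist a b)
    (hcover : ∀ x : E3, ∃ a ∈ A, dist x a ≤ R)
    (a : E3) (k : ℕ) :
    DV A a k ⊆ closedBall a (2 * R * (k : ℝ) ^ ((1 : ℝ) / 3) + 2 * R) := by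
  have hfin (x : E3) (ρ : ℝ) : (A ∩ closedBall x ρ).Finite :=
    .inter_of_totallyBounded_of_pairwise_le_dist hr (fun a ha b hb => hpack a ha b hb)
      (isCompact_closedBall x ρ).totallyBounded
  cases k with
  | zero => exact empty_subset _
  | succ m =>
  intro x (hx : {b ∈ A | dist x b < dist x a}.ncard ≤ m)
  by_contra hxa
  rw [mem_closedBall, not_le] at hxa
  set t := R * ((m + 1 : ℕ) : ℝ) ^ ((1 : ℝ) / 3) + R
  have ht : t < dist x a := by
    have : 0 ≤ R * ((m + 1 : ℕ) : ℝ) ^ ((1 : ℝ) / 3) := by positivity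
    linarith
  have hcloser : A ∩ closedBall x t ⊆ {b ∈ A | dist x b < dist x a} := fun b hb =>
    ⟨hb.1, (mem_closedBall'.mp hb.2).trans_lt ht⟩
  have hmany := le_ncard_inter_closedBall_of_forall_dist_le hR hcover x (m + 1)
  simp only [finrank_euclideanSpace_fin, Nat.cast_ofNat] at hmany
  have hcount := (hmany (hfin x t)).trans <| Set.ncard_le_ncard hcloser <|
    (hfin x (dist x a)).subset fun b hb => ⟨hb.1, mem_closedBall'.mpr hb.2.le⟩
  omega

theorem DV_bounded (A : Set E3) (r R : ℝ) (hr : 0 < r) (hR : 0 < R)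
    (hpack : ∀ a ∈ A, ∀ b ∈ A, a ≠ b → 2 * r ≤ dist a b)
    (hcover : ∀ x : E3, ∃ a ∈ A, dist x a ≤ R)
    (a : E3) (ha : a ∈ A) (k : ℕ) (hk : 1 ≤ k) :
    DV A a k ⊆ closedBall a (2 * R * (k : ℝ) ^ ((1 : ℝ) / 3) + 2 * R) :=
  DV_bounded_general A r R hr hR hpack hcover a k
end
end

section
/- Let U = {0,4,9} and V = {0,1,3} in ℤ, and consider the periodic subsets of ℝ given by P = 15ℤ + (U+V) and Q = 15ℤ + (U−V). Then for every radius t ≥ 0 and every k ≥ 0, the fraction of a period interval of length 15 covered by at least k of the closed intervals [p−t, p+t], p ∈ P, equals the corresponding fraction for Q. -/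
open MeasureTheory Set

noncomputable section

def Uf : Finset ℝ := {0, 4, 9}
def Vf : Finset ℝ := {0, 1, 3}

/-- The set U+V ⊆ ℝ. -/
def SP : Set ℝ := {x | ∃ u ∈ Uf, ∃ v ∈ Vf, x = u + v}

/-- The set U−V ⊆ ℝ. -/
def SQ : Set ℝ := {x | ∃ u ∈ Uf, ∃ v ∈ Vf, x = u - v}

/-- The periodic set 15ℤ + (U+V). -/
def P : Set ℝ := {x | ∃ n : ℤ, ∃ s ∈ SP, x = 15 * n + s}

/-- The periodic set 15ℤ + (U−V). -/
def Q : Set ℝ := {x | ∃ n : ℤ, ∃ s ∈ SQ, x = 15 * n + s}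

/-- Points covered by at least `k` of the closed intervals `[s−t, s+t]`, `s ∈ S`. -/
def coverGE1 (S : Set ℝ) (t : ℝ) (k : ℕ) : Set ℝ :=
  {x | ∃ F : Finset ℝ, F.card = k ∧ ↑F ⊆ S ∧ ∀ s ∈ F, |x - s| ≤ t}





lemma shift9 (g : ℤ → ℝ) (hg : ∀ i, g (i + 9) = g i + 15) (i n : ℤ) :
    g (i + 9 * n) = g i + 15 * n := by
  induction n using Int.induction_on with
  | zero => simp
  | succ m ih =>
      have h : i + 9 * ((m : ℤ) + 1) = (i + 9 * m) + 9 := by ring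
      rw [h, hg, ih]; push_cast; ring
  | pred m ih =>
      have h2 : (i + 9 * (-(m:ℤ) - 1)) + 9 = i + 9 * (-(m:ℤ)) := by ring
      have := hg (i + 9 * (-(m:ℤ) - 1))
      rw [h2] at this
      have : g (i + 9 * (-(m:ℤ) - 1)) = g (i + 9 * (-(m:ℤ))) - 15 := by linarith
      rw [this, ih]; push_cast; ring

lemma coverEq (s : ℤ → ℝ) (hmono : StrictMono s) (t : ℝ) (ht : 0 ≤ t) (m : ℕ) :
    coverGE1 (Set.range s) t (m + 1) = ⋃ i : ℤ, Icc (s (i + m) - t) (s i + t) := by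
  ext x
  constructor
  · rintro ⟨F, hcard, hsub, hdist⟩
    have hinv : ∀ f ∈ F, s (Function.invFun s f) = f := by
      intro f hf
      exact Function.invFun_eq (hsub hf)
    set G : Finset ℤ := F.image (Function.invFun s) with hG
    have hcardG : G.card = m + 1 := by
      rw [hG, Finset.card_image_of_injOn, hcard]
      intro f1 h1 f2 h2 h
      rw [← hinv f1 h1, ← hinv f2 h2, h]
    have hGne : G.Nonempty := Finset.card_pos.mp (by omega)
    set i0 := G.min' hGne
    set i1 := G.max' hGne
    have hi0 : i0 ∈ G := G.min'_mem hGne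
    have hi1 : i1 ∈ G := G.max'_mem hGne
    have hGIcc : G ⊆ Finset.Icc i0 i1 := fun z hz =>
      Finset.mem_Icc.mpr ⟨G.min'_le z hz, G.le_max' z hz⟩
    have hcardIcc : G.card ≤ (Finset.Icc i0 i1).card := Finset.card_le_card hGIcc
    rw [Int.card_Icc] at hcardIcc
    have hspan : i0 + m ≤ i1 := by omega
    -- s i0 ∈ F and s i1 ∈ F
    obtain ⟨f0, hf0F, hf0⟩ := Finset.mem_image.mp hi0
    obtain ⟨f1, hf1F, hf1⟩ := Finset.mem_image.mp hi1
    have hs0 : s i0 ∈ F := by rw [← hf0, hinv f0 hf0F]; exact hf0F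
    have hs1 : s i1 ∈ F := by rw [← hf1, hinv f1 hf1F]; exact hf1F
    have h0 := abs_le.mp (hdist _ hs0)
    have h1 := abs_le.mp (hdist _ hs1)
    refine mem_iUnion.mpr ⟨i0, ?_, ?_⟩
    · have : s (i0 + m) ≤ s i1 := hmono.monotone hspan
      linarith [h1.1]
    · linarith [h0.2]
  · intro hx
    obtain ⟨i, hx⟩ := mem_iUnion.mp hx
    refine ⟨(Finset.Icc i (i + m)).image s, ?_, ?_, ?_⟩
    · rw [Finset.card_image_of_injOn (fun a _ b _ h => hmono.injective h), Int.card_Icc]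
      omega
    · intro f hf
      obtain ⟨j, _, rfl⟩ := Finset.mem_image.mp hf
      exact Set.mem_range_self j
    · intro f hf
      obtain ⟨j, hj, rfl⟩ := Finset.mem_image.mp hf
      rw [Finset.mem_Icc] at hj
      have hlo : s i ≤ s j := hmono.monotone hj.1
      have hhi : s j ≤ s (i + m) := hmono.monotone hj.2
      rw [abs_le]
      obtain ⟨ha, hb⟩ := hx
      constructor <;> linarith


lemma tsum_window (A : Set ℝ) (hA : MeasurableSet A) :
    ∑' q : ℤ, volume (Ico (-(15 * (q : ℝ))) (15 - 15 * q) ∩ A) = volume A := by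
  have hre : ∀ n : ℤ, Ico (-(15 * ((-n : ℤ) : ℝ))) (15 - 15 * ((-n : ℤ) : ℝ)) ∩ A
      = Ico (15 * (n : ℝ)) (15 * n + 15) ∩ A := by
    intro n; congr 1 <;> push_cast <;> ring_nf
  calc ∑' q : ℤ, volume (Ico (-(15 * (q : ℝ))) (15 - 15 * q) ∩ A)
      = ∑' n : ℤ, volume (Ico (15 * (n : ℝ)) (15 * n + 15) ∩ A) := by
        rw [← Equiv.tsum_eq (Equiv.neg ℤ)]
        exact tsum_congr fun n => by rw [Equiv.neg_apply, hre n]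
    _ = volume (⋃ n : ℤ, Ico (15 * (n : ℝ)) (15 * n + 15) ∩ A) := by
        rw [measure_iUnion ?_ fun n => measurableSet_Ico.inter hA]
        intro i j hij
        apply Disjoint.mono inter_subset_left inter_subset_left
        rw [Set.Ico_disjoint_Ico]
        rcases lt_or_gt_of_ne hij with h | h
        · have : (i : ℝ) + 1 ≤ j := by exact_mod_cast h
          calc min (15 * (i:ℝ) + 15) (15 * (j:ℝ) + 15) ≤ 15 * (i:ℝ) + 15 := min_le_left _ _
            _ ≤ 15 * (j:ℝ) := by linarith
            _ ≤ max (15 * (i:ℝ)) (15 * (j:ℝ)) := le_max_right _ _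
        · have : (j : ℝ) + 1 ≤ i := by exact_mod_cast h
          calc min (15 * (i:ℝ) + 15) (15 * (j:ℝ) + 15) ≤ 15 * (j:ℝ) + 15 := min_le_right _ _
            _ ≤ 15 * (i:ℝ) := by linarith
            _ ≤ max (15 * (i:ℝ)) (15 * (j:ℝ)) := le_max_left _ _
    _ = volume A := by
        have huniv : (⋃ n : ℤ, Ico (15 * (n:ℝ)) (15 * n + 15)) = univ := by
          rw [eq_univ_iff_forall]
          intro x
          refine mem_iUnion.mpr ⟨⌊x / 15⌋, ?_, ?_⟩
          · have h := Int.floor_le (x / 15)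
            have h2 : 15 * ((⌊x / 15⌋ : ℝ)) ≤ 15 * (x / 15) := by linarith
            calc 15 * ((⌊x / 15⌋:ℤ) : ℝ) ≤ 15 * (x / 15) := h2
              _ = x := by field_simp
          · have h := Int.lt_floor_add_one (x / 15)
            have hx : x / 15 * 15 = x := by field_simp
            nlinarith
        rw [← iUnion_inter, huniv, univ_inter]

lemma measure_aux (a b : ℤ → ℝ) (hb : StrictMono b) (ha : Monotone a)
    (hpa : ∀ i, a (i + 9) = a i + 15) (hpb : ∀ i, b (i + 9) = b i + 15) :
    volume (Ico (0:ℝ) 15 ∩ ⋃ i : ℤ, Icc (a i) (b i))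
      = ∑ r ∈ Finset.range 9, ENNReal.ofReal (b r - max (a r) (b ((r:ℤ) - 1))) := by
  set W : Set ℝ := Ico (0:ℝ) 15 with hW
  set M : ℤ → ℝ := fun i => max (a i) (b (i - 1)) with hM
  set D : ℤ → Set ℝ := fun i => Ioc (M i) (b i) with hD
  have hDIcc : ∀ i, D i ⊆ Icc (a i) (b i) := fun i x hx =>
    ⟨le_of_lt (lt_of_le_of_lt (le_max_left _ _) hx.1), hx.2⟩
  have hDIoc : ∀ i, D i ⊆ Ioc (b (i - 1)) (b i) := fun i x hx =>
    ⟨lt_of_le_of_lt (le_max_right _ _) hx.1, hx.2⟩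
  -- covering up to the countable set range a
  have hUD : (⋃ i, Icc (a i) (b i)) ⊆ (⋃ i, D i) ∪ Set.range a := by
    intro x hx
    obtain ⟨j, hj⟩ := mem_iUnion.mp hx
    obtain ⟨N, hN⟩ := exists_nat_gt ((b j - x) / 15)
    have hbshift : ∀ z n : ℤ, b (z + 9 * n) = b z + 15 * n := shift9 b hpb
    have hbound : ∀ z : ℤ, x ≤ b z → j - 9 * N ≤ z := by
      intro z hz
      by_contra hcon
      push_neg at hcon
      have h1 : b z ≤ b (j - 9 * N) := hb.monotone (by omega)
      have h2 : b (j - 9 * N) = b j - 15 * N := by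
        have := hbshift j (-(N:ℤ))
        have he : j + 9 * (-(N:ℤ)) = j - 9 * N := by ring
        rw [he] at this
        rw [this]; push_cast; ring
      have h3 : b j - x < 15 * N := by
        have h15 : (0:ℝ) < 15 := by norm_num
        calc b j - x = (b j - x) / 15 * 15 := by field_simp
          _ < N * 15 := by apply mul_lt_mul_of_pos_right hN h15
          _ = 15 * N := by ring
      rw [h2] at h1
      linarith [hz]
    obtain ⟨i0, hi0, hleast⟩ := Int.exists_least_of_bdd ⟨j - 9 * N, hbound⟩ ⟨j, hj.2⟩
    have hij : i0 ≤ j := hleast j hj.2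
    have hax : a i0 ≤ x := le_trans (ha hij) hj.1
    rcases eq_or_lt_of_le hax with heq | hlt
    · exact Or.inr ⟨i0, heq⟩
    · left
      refine mem_iUnion.mpr ⟨i0, ?_, hi0⟩
      apply max_lt hlt
      by_contra hcon
      push_neg at hcon
      exact absurd (hleast (i0 - 1) hcon) (by omega)
  have hmeas0 : volume (W ∩ ⋃ i, Icc (a i) (b i)) = volume (W ∩ ⋃ i, D i) := by
    apply le_antisymm
    · calc volume (W ∩ ⋃ i, Icc (a i) (b i))
          ≤ volume ((W ∩ ⋃ i, D i) ∪ Set.range a) := by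
            apply measure_mono
            rintro x ⟨hw, hx⟩
            rcases hUD hx with h | h
            · exact Or.inl ⟨hw, h⟩
            · exact Or.inr h
        _ ≤ volume (W ∩ ⋃ i, D i) + volume (Set.range a) := measure_union_le _ _
        _ = volume (W ∩ ⋃ i, D i) := by
            rw [Set.Countable.measure_zero (Set.countable_range a) volume, add_zero]
    · exact measure_mono (inter_subset_inter_right _ (iUnion_mono hDIcc))
  rw [hmeas0, inter_iUnion, measure_iUnion ?_ fun i => measurableSet_Ico.inter measurableSet_Ioc]
  swap
  · intro i j hij
    apply Disjoint.mono (inter_subset_right.trans (hDIoc i)) (inter_subset_right.trans (hDIoc j))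
    rw [Set.Ioc_disjoint_Ioc]
    rcases lt_or_gt_of_ne hij with h | h
    · calc min (b i) (b j) ≤ b i := min_le_left _ _
        _ ≤ b (j - 1) := hb.monotone (by omega)
        _ ≤ max (b (i-1)) (b (j-1)) := le_max_right _ _
    · calc min (b i) (b j) ≤ b j := min_le_right _ _
        _ ≤ b (i - 1) := hb.monotone (by omega)
        _ ≤ max (b (i-1)) (b (j-1)) := le_max_left _ _
  -- now tsum over ℤ
  rw [← Equiv.tsum_eq (Int.divModEquiv 9).symm]
  simp only [Int.divModEquiv_symm_apply]
  rw [ENNReal.tsum_prod']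
  rw [ENNReal.tsum_comm]
  have hMs : ∀ (i n : ℤ), M (i + 9 * n) = M i + 15 * n := by
    intro i n
    have h1 : a (i + 9 * n) = a i + 15 * n := shift9 a hpa i n
    have h2 : b ((i + 9 * n) - 1) = b (i - 1) + 15 * n := by
      have := shift9 b hpb (i - 1) n
      rw [show (i + 9 * n) - 1 = (i - 1) + 9 * n by ring, this]
    simp only [hM, h1, h2]
    rw [max_add_add_right]
  have hstep : ∀ r : Fin 9, ∑' q : ℤ, volume (W ∩ Ioc (M (q * ((9:ℕ):ℤ) + ((r:ℕ):ℤ))) (b (q * ((9:ℕ):ℤ) + ((r:ℕ):ℤ))))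
      = ENNReal.ofReal (b ((r:ℕ):ℤ) - M ((r:ℕ):ℤ)) := by
    intro r
    have hidx : ∀ q : ℤ, q * ((9:ℕ):ℤ) + ((r:ℕ):ℤ) = ((r:ℕ):ℤ) + 9 * q := by intro q; push_cast; ring
    have hterm : ∀ q : ℤ, volume (W ∩ Ioc (M (q * ((9:ℕ):ℤ) + ((r:ℕ):ℤ))) (b (q * ((9:ℕ):ℤ) + ((r:ℕ):ℤ))))
        = volume (Ico (-(15 * (q:ℝ))) (15 - 15 * q) ∩ Ioc (M ((r:ℕ):ℤ)) (b ((r:ℕ):ℤ))) := by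
      intro q
      rw [hidx q, hMs _ q, shift9 b hpb _ q]
      have hpre : (fun x : ℝ => x + 15 * (q:ℝ)) ⁻¹' (W ∩ Ioc (M ((r:ℕ):ℤ) + 15 * q) (b ((r:ℕ):ℤ) + 15 * q))
          = Ico (-(15 * (q:ℝ))) (15 - 15 * q) ∩ Ioc (M ((r:ℕ):ℤ)) (b ((r:ℕ):ℤ)) := by
        rw [Set.preimage_inter]
        congr 1
        · ext x; simp only [hW, mem_preimage, mem_Ico]; constructor <;> intro h <;> constructor <;> linarith [h.1, h.2]
        · ext x; simp only [mem_preimage, mem_Ioc]; constructor <;> intro h <;> constructor <;> linarith [h.1, h.2]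
      rw [← hpre, measure_preimage_add_right]
    rw [tsum_congr hterm, tsum_window _ measurableSet_Ioc, Real.volume_Ioc]
  rw [tsum_congr hstep, tsum_fintype]
  rw [show (fun r : Fin 9 => ENNReal.ofReal (b ((r:ℕ):ℤ) - M ((r:ℕ):ℤ)))
    = fun r : Fin 9 => (fun j : ℕ => ENNReal.ofReal (b (j:ℤ) - M (j:ℤ))) (r:ℕ) from rfl] at *
  rw [Fin.sum_univ_eq_sum_range (fun j : ℕ => ENNReal.ofReal (b (j:ℤ) - M (j:ℤ))) 9]

lemma sub_max' (x y z : ℝ) : z - max x y = min (z - x) (z - y) := by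
  rcases le_total x y with h | h
  · rw [max_eq_right h, min_eq_right (by linarith)]
  · rw [max_eq_left h, min_eq_left (by linarith)]

lemma sum_ofReal_eq (f : ℕ → ℝ) (n : ℕ) :
    ∑ r ∈ Finset.range n, ENNReal.ofReal (f r)
      = ENNReal.ofReal (∑ r ∈ Finset.range n, max 0 (f r)) := by
  rw [ENNReal.ofReal_sum_of_nonneg (fun i _ => le_max_left _ _)]
  apply Finset.sum_congr rfl
  intro i _
  rcases le_total (f i) 0 with h | h
  · rw [max_eq_left h, ENNReal.ofReal_of_nonpos h, ENNReal.ofReal_zero]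
  · rw [max_eq_right h]

lemma clamp1 (x : ℝ) : max 0 (min x 1) = max 0 x - max 0 (x - 1) := by
  simp only [max_def, min_def]
  split_ifs <;> linarith


lemma clamp2 (x : ℝ) : max 0 (min x 2) = max 0 x - max 0 (x - 2) := by
  simp only [max_def, min_def]
  split_ifs <;> linarith


lemma clamp3 (x : ℝ) : max 0 (min x 3) = max 0 x - max 0 (x - 3) := by
  simp only [max_def, min_def]
  split_ifs <;> linarith


lemma main_formula (s : ℤ → ℝ) (hmono : StrictMono s) (hper : ∀ i, s (i + 9) = s i + 15)
    (t : ℝ) (ht : 0 ≤ t) (q r0 : ℕ) :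
    volume (Ico (0:ℝ) 15 ∩ coverGE1 (Set.range s) t (9 * q + r0 + 1))
      = ENNReal.ofReal (∑ r ∈ Finset.range 9,
          max 0 (min (2 * t - 15 * q - (s ((r:ℤ) + (r0:ℤ)) - s (r:ℤ))) (s (r:ℤ) - s ((r:ℤ) - 1)))) := by
  rw [coverEq s hmono t ht (9 * q + r0)]
  have hb : StrictMono (fun i : ℤ => s i + t) := fun i j h => by
    have := hmono h; dsimp; linarith
  have ha : Monotone (fun i : ℤ => s (i + (9 * q + r0 : ℕ)) - t) := by
    intro i j h
    have := hmono.monotone (show i + ((9 * q + r0 : ℕ):ℤ) ≤ j + ((9 * q + r0 : ℕ):ℤ) by omega)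
    dsimp only; linarith
  have hpa : ∀ i : ℤ, s ((i + 9) + ((9 * q + r0 : ℕ):ℤ)) - t = (s (i + ((9 * q + r0 : ℕ):ℤ)) - t) + 15 := by
    intro i
    rw [show (i + 9) + ((9 * q + r0 : ℕ):ℤ) = (i + ((9 * q + r0 : ℕ):ℤ)) + 9 by ring, hper]
    ring
  have hpb : ∀ i : ℤ, s (i + 9) + t = (s i + t) + 15 := fun i => by rw [hper]; ring
  rw [measure_aux (fun i => s (i + (9 * q + r0 : ℕ)) - t) (fun i => s i + t) hb ha hpa hpb]
  rw [sum_ofReal_eq (fun r : ℕ => (fun i : ℤ => s i + t) r - max ((fun i : ℤ => s (i + (9 * q + r0 : ℕ)) - t) r) ((fun i : ℤ => s i + t) ((r:ℤ) - 1))) 9]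
  congr 1
  apply Finset.sum_congr rfl
  intro r _
  dsimp only
  congr 1
  rw [sub_max']
  congr 1
  · rw [show ((r:ℤ) + ((9 * q + r0 : ℕ):ℤ)) = ((r:ℤ) + (r0:ℤ)) + 9 * (q:ℤ) by push_cast; ring,
      shift9 s hper]
    push_cast
    ring
  · ring
def wP : ℤ → ℝ := fun r => if r = 0 then 0 else if r = 1 then 1 else if r = 2 then 3 else if r = 3 then 4 else if r = 4 then 5 else if r = 5 then 7 else if r = 6 then 9 else if r = 7 then 10 else 12
def sP : ℤ → ℝ := fun i => 15 * ((i / 9 : ℤ) : ℝ) + wP (i % 9)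
lemma sP_eval_m1 : sP (-1) = -3 := by
  have h1 : (-1:ℤ) / 9 = -1 := by decide
  have h2 : (-1:ℤ) % 9 = 8 := by decide
  rw [sP, h1, h2]
  norm_num [wP]
lemma sP_eval_0 : sP (0) = 0 := by
  have h1 : (0:ℤ) / 9 = 0 := by decide
  have h2 : (0:ℤ) % 9 = 0 := by decide
  rw [sP, h1, h2]
  norm_num [wP]
lemma sP_eval_1 : sP (1) = 1 := by
  have h1 : (1:ℤ) / 9 = 0 := by decide
  have h2 : (1:ℤ) % 9 = 1 := by decide
  rw [sP, h1, h2]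
  norm_num [wP]
lemma sP_eval_2 : sP (2) = 3 := by
  have h1 : (2:ℤ) / 9 = 0 := by decide
  have h2 : (2:ℤ) % 9 = 2 := by decide
  rw [sP, h1, h2]
  norm_num [wP]
lemma sP_eval_3 : sP (3) = 4 := by
  have h1 : (3:ℤ) / 9 = 0 := by decide
  have h2 : (3:ℤ) % 9 = 3 := by decide
  rw [sP, h1, h2]
  norm_num [wP]
lemma sP_eval_4 : sP (4) = 5 := by
  have h1 : (4:ℤ) / 9 = 0 := by decide
  have h2 : (4:ℤ) % 9 = 4 := by decide
  rw [sP, h1, h2]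
  norm_num [wP]
lemma sP_eval_5 : sP (5) = 7 := by
  have h1 : (5:ℤ) / 9 = 0 := by decide
  have h2 : (5:ℤ) % 9 = 5 := by decide
  rw [sP, h1, h2]
  norm_num [wP]
lemma sP_eval_6 : sP (6) = 9 := by
  have h1 : (6:ℤ) / 9 = 0 := by decide
  have h2 : (6:ℤ) % 9 = 6 := by decide
  rw [sP, h1, h2]
  norm_num [wP]
lemma sP_eval_7 : sP (7) = 10 := by
  have h1 : (7:ℤ) / 9 = 0 := by decide
  have h2 : (7:ℤ) % 9 = 7 := by decide
  rw [sP, h1, h2]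
  norm_num [wP]
lemma sP_eval_8 : sP (8) = 12 := by
  have h1 : (8:ℤ) / 9 = 0 := by decide
  have h2 : (8:ℤ) % 9 = 8 := by decide
  rw [sP, h1, h2]
  norm_num [wP]
lemma sP_eval_9 : sP (9) = 15 := by
  have h1 : (9:ℤ) / 9 = 1 := by decide
  have h2 : (9:ℤ) % 9 = 0 := by decide
  rw [sP, h1, h2]
  norm_num [wP]
lemma sP_eval_10 : sP (10) = 16 := by
  have h1 : (10:ℤ) / 9 = 1 := by decide
  have h2 : (10:ℤ) % 9 = 1 := by decide
  rw [sP, h1, h2]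
  norm_num [wP]
lemma sP_eval_11 : sP (11) = 18 := by
  have h1 : (11:ℤ) / 9 = 1 := by decide
  have h2 : (11:ℤ) % 9 = 2 := by decide
  rw [sP, h1, h2]
  norm_num [wP]
lemma sP_eval_12 : sP (12) = 19 := by
  have h1 : (12:ℤ) / 9 = 1 := by decide
  have h2 : (12:ℤ) % 9 = 3 := by decide
  rw [sP, h1, h2]
  norm_num [wP]
lemma sP_eval_13 : sP (13) = 20 := by
  have h1 : (13:ℤ) / 9 = 1 := by decide
  have h2 : (13:ℤ) % 9 = 4 := by decide
  rw [sP, h1, h2]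
  norm_num [wP]
lemma sP_eval_14 : sP (14) = 22 := by
  have h1 : (14:ℤ) / 9 = 1 := by decide
  have h2 : (14:ℤ) % 9 = 5 := by decide
  rw [sP, h1, h2]
  norm_num [wP]
lemma sP_eval_15 : sP (15) = 24 := by
  have h1 : (15:ℤ) / 9 = 1 := by decide
  have h2 : (15:ℤ) % 9 = 6 := by decide
  rw [sP, h1, h2]
  norm_num [wP]
lemma sP_eval_16 : sP (16) = 25 := by
  have h1 : (16:ℤ) / 9 = 1 := by decide
  have h2 : (16:ℤ) % 9 = 7 := by decide
  rw [sP, h1, h2]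
  norm_num [wP]
lemma sP_eval_17 : sP (17) = 27 := by
  have h1 : (17:ℤ) / 9 = 1 := by decide
  have h2 : (17:ℤ) % 9 = 8 := by decide
  rw [sP, h1, h2]
  norm_num [wP]
lemma sP_per : ∀ i : ℤ, sP (i + 9) = sP i + 15 := by
  intro i
  have h1 : (i + 9) / 9 = i / 9 + 1 := by omega
  have h2 : (i + 9) % 9 = i % 9 := by omega
  rw [sP, sP, h1, h2]
  push_cast
  ring
lemma sP_mono : StrictMono sP := by
  apply strictMono_int_of_lt_succ
  intro i
  have h0 : 0 ≤ i % 9 := by omega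
  have h8 : i % 9 ≤ 8 := by omega
  have hi : i = (i % 9) + 9 * (i / 9) := by omega
  rw [hi, show (i % 9 + 9 * (i / 9) + 1 : ℤ) = (i % 9 + 1) + 9 * (i / 9) by ring, shift9 sP sP_per, shift9 sP sP_per]
  have hlt : sP (i % 9) < sP (i % 9 + 1) := by
    set r := i % 9 with hr
    interval_cases r <;> norm_num [sP_eval_0, sP_eval_1, sP_eval_2, sP_eval_3, sP_eval_4, sP_eval_5, sP_eval_6, sP_eval_7, sP_eval_8, sP_eval_9]
  linarith
def wQ : ℤ → ℝ := fun r => if r = 0 then 0 else if r = 1 then 1 else if r = 2 then 3 else if r = 3 then 4 else if r = 4 then 6 else if r = 5 then 8 else if r = 6 then 9 else if r = 7 then 12 else 14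
def sQ : ℤ → ℝ := fun i => 15 * ((i / 9 : ℤ) : ℝ) + wQ (i % 9)
lemma sQ_eval_m1 : sQ (-1) = -1 := by
  have h1 : (-1:ℤ) / 9 = -1 := by decide
  have h2 : (-1:ℤ) % 9 = 8 := by decide
  rw [sQ, h1, h2]
  norm_num [wQ]
lemma sQ_eval_0 : sQ (0) = 0 := by
  have h1 : (0:ℤ) / 9 = 0 := by decide
  have h2 : (0:ℤ) % 9 = 0 := by decide
  rw [sQ, h1, h2]
  norm_num [wQ]
lemma sQ_eval_1 : sQ (1) = 1 := by
  have h1 : (1:ℤ) / 9 = 0 := by decide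
  have h2 : (1:ℤ) % 9 = 1 := by decide
  rw [sQ, h1, h2]
  norm_num [wQ]
lemma sQ_eval_2 : sQ (2) = 3 := by
  have h1 : (2:ℤ) / 9 = 0 := by decide
  have h2 : (2:ℤ) % 9 = 2 := by decide
  rw [sQ, h1, h2]
  norm_num [wQ]
lemma sQ_eval_3 : sQ (3) = 4 := by
  have h1 : (3:ℤ) / 9 = 0 := by decide
  have h2 : (3:ℤ) % 9 = 3 := by decide
  rw [sQ, h1, h2]
  norm_num [wQ]
lemma sQ_eval_4 : sQ (4) = 6 := by
  have h1 : (4:ℤ) / 9 = 0 := by decide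
  have h2 : (4:ℤ) % 9 = 4 := by decide
  rw [sQ, h1, h2]
  norm_num [wQ]
lemma sQ_eval_5 : sQ (5) = 8 := by
  have h1 : (5:ℤ) / 9 = 0 := by decide
  have h2 : (5:ℤ) % 9 = 5 := by decide
  rw [sQ, h1, h2]
  norm_num [wQ]
lemma sQ_eval_6 : sQ (6) = 9 := by
  have h1 : (6:ℤ) / 9 = 0 := by decide
  have h2 : (6:ℤ) % 9 = 6 := by decide
  rw [sQ, h1, h2]
  norm_num [wQ]
lemma sQ_eval_7 : sQ (7) = 12 := by
  have h1 : (7:ℤ) / 9 = 0 := by decide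
  have h2 : (7:ℤ) % 9 = 7 := by decide
  rw [sQ, h1, h2]
  norm_num [wQ]
lemma sQ_eval_8 : sQ (8) = 14 := by
  have h1 : (8:ℤ) / 9 = 0 := by decide
  have h2 : (8:ℤ) % 9 = 8 := by decide
  rw [sQ, h1, h2]
  norm_num [wQ]
lemma sQ_eval_9 : sQ (9) = 15 := by
  have h1 : (9:ℤ) / 9 = 1 := by decide
  have h2 : (9:ℤ) % 9 = 0 := by decide
  rw [sQ, h1, h2]
  norm_num [wQ]
lemma sQ_eval_10 : sQ (10) = 16 := by
  have h1 : (10:ℤ) / 9 = 1 := by decide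
  have h2 : (10:ℤ) % 9 = 1 := by decide
  rw [sQ, h1, h2]
  norm_num [wQ]
lemma sQ_eval_11 : sQ (11) = 18 := by
  have h1 : (11:ℤ) / 9 = 1 := by decide
  have h2 : (11:ℤ) % 9 = 2 := by decide
  rw [sQ, h1, h2]
  norm_num [wQ]
lemma sQ_eval_12 : sQ (12) = 19 := by
  have h1 : (12:ℤ) / 9 = 1 := by decide
  have h2 : (12:ℤ) % 9 = 3 := by decide
  rw [sQ, h1, h2]
  norm_num [wQ]
lemma sQ_eval_13 : sQ (13) = 21 := by
  have h1 : (13:ℤ) / 9 = 1 := by decide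
  have h2 : (13:ℤ) % 9 = 4 := by decide
  rw [sQ, h1, h2]
  norm_num [wQ]
lemma sQ_eval_14 : sQ (14) = 23 := by
  have h1 : (14:ℤ) / 9 = 1 := by decide
  have h2 : (14:ℤ) % 9 = 5 := by decide
  rw [sQ, h1, h2]
  norm_num [wQ]
lemma sQ_eval_15 : sQ (15) = 24 := by
  have h1 : (15:ℤ) / 9 = 1 := by decide
  have h2 : (15:ℤ) % 9 = 6 := by decide
  rw [sQ, h1, h2]
  norm_num [wQ]
lemma sQ_eval_16 : sQ (16) = 27 := by
  have h1 : (16:ℤ) / 9 = 1 := by decide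
  have h2 : (16:ℤ) % 9 = 7 := by decide
  rw [sQ, h1, h2]
  norm_num [wQ]
lemma sQ_eval_17 : sQ (17) = 29 := by
  have h1 : (17:ℤ) / 9 = 1 := by decide
  have h2 : (17:ℤ) % 9 = 8 := by decide
  rw [sQ, h1, h2]
  norm_num [wQ]
lemma sQ_per : ∀ i : ℤ, sQ (i + 9) = sQ i + 15 := by
  intro i
  have h1 : (i + 9) / 9 = i / 9 + 1 := by omega
  have h2 : (i + 9) % 9 = i % 9 := by omega
  rw [sQ, sQ, h1, h2]
  push_cast
  ring
lemma sQ_mono : StrictMono sQ := by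
  apply strictMono_int_of_lt_succ
  intro i
  have h0 : 0 ≤ i % 9 := by omega
  have h8 : i % 9 ≤ 8 := by omega
  have hi : i = (i % 9) + 9 * (i / 9) := by omega
  rw [hi, show (i % 9 + 9 * (i / 9) + 1 : ℤ) = (i % 9 + 1) + 9 * (i / 9) by ring, shift9 sQ sQ_per, shift9 sQ sQ_per]
  have hlt : sQ (i % 9) < sQ (i % 9 + 1) := by
    set r := i % 9 with hr
    interval_cases r <;> norm_num [sQ_eval_0, sQ_eval_1, sQ_eval_2, sQ_eval_3, sQ_eval_4, sQ_eval_5, sQ_eval_6, sQ_eval_7, sQ_eval_8, sQ_eval_9]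
  linarith


lemma P_eq : P = Set.range sP := by
  ext x
  simp only [P, SP, Set.mem_setOf_eq, Set.mem_range]
  constructor
  · rintro ⟨n, s', ⟨u, hu, v, hv, rfl⟩, rfl⟩
    simp only [Uf, Vf, Finset.mem_insert, Finset.mem_singleton] at hu hv
    rcases hu with rfl | rfl | rfl <;> rcases hv with rfl | rfl | rfl
    · exact ⟨0 + 9 * (n + (0)), by rw [shift9 sP sP_per, sP_eval_0]; push_cast; ring⟩
    · exact ⟨1 + 9 * (n + (0)), by rw [shift9 sP sP_per, sP_eval_1]; push_cast; ring⟩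
    · exact ⟨2 + 9 * (n + (0)), by rw [shift9 sP sP_per, sP_eval_2]; push_cast; ring⟩
    · exact ⟨3 + 9 * (n + (0)), by rw [shift9 sP sP_per, sP_eval_3]; push_cast; ring⟩
    · exact ⟨4 + 9 * (n + (0)), by rw [shift9 sP sP_per, sP_eval_4]; push_cast; ring⟩
    · exact ⟨5 + 9 * (n + (0)), by rw [shift9 sP sP_per, sP_eval_5]; push_cast; ring⟩
    · exact ⟨6 + 9 * (n + (0)), by rw [shift9 sP sP_per, sP_eval_6]; push_cast; ring⟩
    · exact ⟨7 + 9 * (n + (0)), by rw [shift9 sP sP_per, sP_eval_7]; push_cast; ring⟩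
    · exact ⟨8 + 9 * (n + (0)), by rw [shift9 sP sP_per, sP_eval_8]; push_cast; ring⟩
  · rintro ⟨i, rfl⟩
    have hx : sP i = 15 * ((i / 9 : ℤ) : ℝ) + wP (i % 9) := rfl
    rw [hx]
    have h0 : 0 ≤ i % 9 := by omega
    have h8 : i % 9 ≤ 8 := by omega
    set r := i % 9 with hr
    interval_cases r
    · exact ⟨i / 9, 0, ⟨0, by norm_num [Uf], 0, by norm_num [Vf], by norm_num⟩, by norm_num [wP]; try push_cast; try ring⟩
    · exact ⟨i / 9, 1, ⟨0, by norm_num [Uf], 1, by norm_num [Vf], by norm_num⟩, by norm_num [wP]; try push_cast; try ring⟩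
    · exact ⟨i / 9, 3, ⟨0, by norm_num [Uf], 3, by norm_num [Vf], by norm_num⟩, by norm_num [wP]; try push_cast; try ring⟩
    · exact ⟨i / 9, 4, ⟨4, by norm_num [Uf], 0, by norm_num [Vf], by norm_num⟩, by norm_num [wP]; try push_cast; try ring⟩
    · exact ⟨i / 9, 5, ⟨4, by norm_num [Uf], 1, by norm_num [Vf], by norm_num⟩, by norm_num [wP]; try push_cast; try ring⟩
    · exact ⟨i / 9, 7, ⟨4, by norm_num [Uf], 3, by norm_num [Vf], by norm_num⟩, by norm_num [wP]; try push_cast; try ring⟩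
    · exact ⟨i / 9, 9, ⟨9, by norm_num [Uf], 0, by norm_num [Vf], by norm_num⟩, by norm_num [wP]; try push_cast; try ring⟩
    · exact ⟨i / 9, 10, ⟨9, by norm_num [Uf], 1, by norm_num [Vf], by norm_num⟩, by norm_num [wP]; try push_cast; try ring⟩
    · exact ⟨i / 9, 12, ⟨9, by norm_num [Uf], 3, by norm_num [Vf], by norm_num⟩, by norm_num [wP]; try push_cast; try ring⟩

lemma Q_eq : Q = Set.range sQ := by
  ext x
  simp only [Q, SQ, Set.mem_setOf_eq, Set.mem_range]
  constructor
  · rintro ⟨n, s', ⟨u, hu, v, hv, rfl⟩, rfl⟩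
    simp only [Uf, Vf, Finset.mem_insert, Finset.mem_singleton] at hu hv
    rcases hu with rfl | rfl | rfl <;> rcases hv with rfl | rfl | rfl
    · exact ⟨0 + 9 * (n + (0)), by rw [shift9 sQ sQ_per, sQ_eval_0]; push_cast; ring⟩
    · exact ⟨8 + 9 * (n + (-1)), by rw [shift9 sQ sQ_per, sQ_eval_8]; push_cast; ring⟩
    · exact ⟨7 + 9 * (n + (-1)), by rw [shift9 sQ sQ_per, sQ_eval_7]; push_cast; ring⟩
    · exact ⟨3 + 9 * (n + (0)), by rw [shift9 sQ sQ_per, sQ_eval_3]; push_cast; ring⟩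
    · exact ⟨2 + 9 * (n + (0)), by rw [shift9 sQ sQ_per, sQ_eval_2]; push_cast; ring⟩
    · exact ⟨1 + 9 * (n + (0)), by rw [shift9 sQ sQ_per, sQ_eval_1]; push_cast; ring⟩
    · exact ⟨6 + 9 * (n + (0)), by rw [shift9 sQ sQ_per, sQ_eval_6]; push_cast; ring⟩
    · exact ⟨5 + 9 * (n + (0)), by rw [shift9 sQ sQ_per, sQ_eval_5]; push_cast; ring⟩
    · exact ⟨4 + 9 * (n + (0)), by rw [shift9 sQ sQ_per, sQ_eval_4]; push_cast; ring⟩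
  · rintro ⟨i, rfl⟩
    have hx : sQ i = 15 * ((i / 9 : ℤ) : ℝ) + wQ (i % 9) := rfl
    rw [hx]
    have h0 : 0 ≤ i % 9 := by omega
    have h8 : i % 9 ≤ 8 := by omega
    set r := i % 9 with hr
    interval_cases r
    · exact ⟨i / 9, 0, ⟨0, by norm_num [Uf], 0, by norm_num [Vf], by norm_num⟩, by norm_num [wQ]; try push_cast; try ring⟩
    · exact ⟨i / 9, 1, ⟨4, by norm_num [Uf], 3, by norm_num [Vf], by norm_num⟩, by norm_num [wQ]; try push_cast; try ring⟩
    · exact ⟨i / 9, 3, ⟨4, by norm_num [Uf], 1, by norm_num [Vf], by norm_num⟩, by norm_num [wQ]; try push_cast; try ring⟩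
    · exact ⟨i / 9, 4, ⟨4, by norm_num [Uf], 0, by norm_num [Vf], by norm_num⟩, by norm_num [wQ]; try push_cast; try ring⟩
    · exact ⟨i / 9, 6, ⟨9, by norm_num [Uf], 3, by norm_num [Vf], by norm_num⟩, by norm_num [wQ]; try push_cast; try ring⟩
    · exact ⟨i / 9, 8, ⟨9, by norm_num [Uf], 1, by norm_num [Vf], by norm_num⟩, by norm_num [wQ]; try push_cast; try ring⟩
    · exact ⟨i / 9, 9, ⟨9, by norm_num [Uf], 0, by norm_num [Vf], by norm_num⟩, by norm_num [wQ]; try push_cast; try ring⟩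
    · exact ⟨i / 9 + 1, -3, ⟨0, by norm_num [Uf], 3, by norm_num [Vf], by norm_num⟩, by norm_num [wQ]; try push_cast; try ring⟩
    · exact ⟨i / 9 + 1, -1, ⟨0, by norm_num [Uf], 1, by norm_num [Vf], by norm_num⟩, by norm_num [wQ]; try push_cast; try ring⟩

set_option maxHeartbeats 4000000 in
theorem saghafian_sets_same_density_functions (t : ℝ) (ht : 0 ≤ t) (k : ℕ) :
    volume (Set.Ico (0 : ℝ) 15 ∩ coverGE1 P t k) / 15 =
      volume (Set.Ico (0 : ℝ) 15 ∩ coverGE1 Q t k) / 15 := by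
  rcases k with _ | m
  · have h1 : coverGE1 P t 0 = univ := by
      rw [eq_univ_iff_forall]
      intro x
      exact ⟨∅, Finset.card_empty, by simp, by simp⟩
    have h2 : coverGE1 Q t 0 = univ := by
      rw [eq_univ_iff_forall]
      intro x
      exact ⟨∅, Finset.card_empty, by simp, by simp⟩
    rw [h1, h2]
  · suffices h : volume (Set.Ico (0 : ℝ) 15 ∩ coverGE1 P t (m + 1))
        = volume (Set.Ico (0 : ℝ) 15 ∩ coverGE1 Q t (m + 1)) by rw [h]
    have hm : m = 9 * (m / 9) + m % 9 := by omega
    rw [P_eq, Q_eq, show m + 1 = 9 * (m / 9) + m % 9 + 1 by omega,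
      main_formula sP sP_mono sP_per t ht (m / 9) (m % 9),
      main_formula sQ sQ_mono sQ_per t ht (m / 9) (m % 9)]
    congr 1
    have h9 : m % 9 ≤ 8 := by omega
    have h0 : 0 ≤ m % 9 := by omega
    set r0 := m % 9 with hr0
    interval_cases r0 <;>
    · simp only [Finset.sum_range_succ, Finset.sum_range_zero]
      norm_num [sP_eval_m1, sP_eval_0, sP_eval_1, sP_eval_2, sP_eval_3, sP_eval_4, sP_eval_5, sP_eval_6, sP_eval_7, sP_eval_8, sP_eval_9, sP_eval_10, sP_eval_11, sP_eval_12, sP_eval_13, sP_eval_14, sP_eval_15, sP_eval_16, sP_eval_17, sQ_eval_m1, sQ_eval_0, sQ_eval_1, sQ_eval_2, sQ_eval_3, sQ_eval_4, sQ_eval_5, sQ_eval_6, sQ_eval_7, sQ_eval_8, sQ_eval_9, sQ_eval_10, sQ_eval_11, sQ_eval_12, sQ_eval_13, sQ_eval_14, sQ_eval_15, sQ_eval_16, sQ_eval_17]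
      simp only [clamp1, clamp2, clamp3]
      ring_nf
end
end

section
/- Let A ⊆ ℝ³ be locally finite and a ∈ A. Then for every k ≥ 1, the k-th Dirichlet–Voronoi domain D_k(a;A) = {x ∈ ℝ³ : #{b ∈ A : ‖x−b‖ < ‖x−a‖} ≤ k−1} is a closed and star-convex set with respect to the center a (i.e., for every x ∈ D_k(a;A) and λ ∈ [0,1], the point a + λ(x−a) also lies in D_k(a;A)). -/
open MeasureTheory Set Metric Pointwise

noncomputable section

/-! If `x` is strictly closer to `b` than to `a`, so is every point near `x`; since only finitely
many `b` are involved, the number of such `b` can only jump up near `x`, so each domain is a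
sublevel set of a lower semicontinuous function. Moving `x` towards `a` shrinks the set of such
`b`, because `dist x a` splits as `dist x y + dist y a` at every point `y` of the segment. -/

open Topology

section CloserPoints

variable {α : Type*} [PseudoMetricSpace α]

theorem finite_setOf_dist_lt_of_inter_isCompact_finite [ProperSpace α] {A : Set α}
    (hA : ∀ K : Set α, IsCompact K → (A ∩ K).Finite) (x : α) (r : ℝ) :
    {b ∈ A | dist x b < r}.Finite :=
  (hA _ (isCompact_closedBall x r)).subset fun _ ⟨hbA, hb⟩ => ⟨hbA, mem_closedBall'.2 hb.le⟩

theorem eventually_setOf_dist_lt_dist_subset (A : Set α) (a : α) {x : α}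
    (hx : {b ∈ A | dist x b < dist x a}.Finite) :
    ∀ᶠ y in 𝓝 x, {b ∈ A | dist x b < dist x a} ⊆ {b ∈ A | dist y b < dist y a} := by
  have hcloser : ∀ᶠ y in 𝓝 x, ∀ b ∈ {b ∈ A | dist x b < dist x a}, dist y b < dist y a :=
    hx.eventually_all.2 fun b hb =>
      (continuous_id.dist continuous_const).continuousAt.eventually_lt
        (continuous_id.dist continuous_const).continuousAt hb.2
  filter_upwards [hcloser] with y hy b hb using ⟨hb.1, hy b hb⟩

theorem setOf_dist_lt_dist_subset_of_dist_add_dist_eq (A : Set α) {a x y : α}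
    (hy : dist x y + dist y a = dist x a) :
    {b ∈ A | dist y b < dist y a} ⊆ {b ∈ A | dist x b < dist x a} := fun b ⟨hbA, hb⟩ =>
  ⟨hbA, calc dist x b ≤ dist x y + dist y b := dist_triangle x y b
    _ < dist x y + dist y a := by gcongr
    _ = dist x a := hy⟩

end CloserPoints

theorem lowerSemicontinuous_ncard_of_eventually_subset {X β : Type*} [TopologicalSpace X]
    {S : X → Set β} (hfin : ∀ x, (S x).Finite) (hS : ∀ x, ∀ᶠ y in 𝓝 x, S x ⊆ S y) :
    LowerSemicontinuous fun x => (S x).ncard := fun x _ hn =>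
  (hS x).mono fun y hy => hn.trans_le (Set.ncard_le_ncard hy (hfin y))

section DirichletVoronoi

variable {A : Set E3} (hA : ∀ K : Set E3, IsCompact K → (A ∩ K).Finite) (a : E3)
include hA

theorem isClosed_DV : ∀ k, IsClosed (DV A a k)
  | 0 => isClosed_empty
  | k + 1 => (lowerSemicontinuous_ncard_of_eventually_subset
      (fun x => finite_setOf_dist_lt_of_inter_isCompact_finite hA x _)
      (fun x => eventually_setOf_dist_lt_dist_subset A a
        (finite_setOf_dist_lt_of_inter_isCompact_finite hA x _))).isClosed_preimage k

theorem starConvex_DV : ∀ k, StarConvex ℝ a (DV A a k)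
  | 0 => starConvex_empty a
  | k + 1 => fun x hx s t hs ht hst => by
    have hseg : s • a + t • x ∈ segment ℝ a x := ⟨s, t, hs, ht, hst, rfl⟩
    have hdist := dist_add_dist_of_mem_segment (segment_symm ℝ a x ▸ hseg)
    exact (Set.ncard_le_ncard (setOf_dist_lt_dist_subset_of_dist_add_dist_eq A hdist)
      (finite_setOf_dist_lt_of_inter_isCompact_finite hA x _)).trans hx

end DirichletVoronoi

theorem DV_closed_starConvex_general (A : Set E3)
    (hlf : ∀ K : Set E3, IsCompact K → (A ∩ K).Finite)
    (a : E3) (k : ℕ) :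
    IsClosed (DV A a k) ∧
      ∀ x ∈ DV A a k, ∀ l : ℝ, l ∈ Set.Icc (0 : ℝ) 1 →
        a + l • (x - a) ∈ DV A a k := by
  refine ⟨isClosed_DV hlf a k, fun x hx l hl => ?_⟩
  have hseg : a + l • (x - a) ∈ segment ℝ a x := segment_eq_image' ℝ a x ▸ ⟨l, hl, rfl⟩
  exact (starConvex_DV hlf a k).segment_subset hx hseg

theorem DV_closed_starConvex (A : Set E3)
    (hlf : ∀ K : Set E3, IsCompact K → (A ∩ K).Finite)
    (a : E3) (ha : a ∈ A) (k : ℕ) (hk : 1 ≤ k) :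
    IsClosed (DV A a k) ∧
      ∀ x ∈ DV A a k, ∀ l : ℝ, l ∈ Set.Icc (0 : ℝ) 1 →
        a + l • (x - a) ∈ DV A a k :=
  DV_closed_starConvex_general A hlf a k
end
end
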